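/- arXiv:2509.18752 — 2 statements merged into one kernel-verified Lean document; each statement's English description precedes it below -/
import Mathlib

section
/- Lower bound in the SDP characterization of the vector atomic norm: Let x ∈ ℂ^N, u ∈ ℂ^N, and t ∈ ℝ be such that the block matrix [[Toep(u), x], [x^H, t]] ∈ ℂ^{(N+1)×(N+1)} is positive semidefinite. Then ‖x‖_{𝒜_f} ≤ (1/(2N)) trace(Toep(u)) + t/2, where ‖·‖_{𝒜_f} denotes the atomic norm over complex sinusoids. -/
open Real Matrix ComplexOrder

/-- The far-field steering vector (atom) `d(φ) ∈ ℂ^N`, `[d(φ)]ₙ = exp(j2π(n−1)φ)`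
(zero-based index). -/
noncomputable def dvec (N : ℕ) (φ : ℝ) : Fin N → ℂ :=
  fun n => Complex.exp (Complex.I * (2 * Real.pi * (n : ℝ) * φ))

/-- `Toep u` is the `N × N` Hermitian Toeplitz matrix whose first column is `u`. -/
noncomputable def Toep (N : ℕ) (u : Fin N → ℂ) : Matrix (Fin N) (Fin N) ℂ :=
  Matrix.of fun m n =>
    if _h : (n : ℕ) ≤ (m : ℕ) then
      u ⟨(m : ℕ) - (n : ℕ), Nat.lt_of_le_of_lt (Nat.sub_le _ _) m.2⟩
    else
      star (u ⟨(n : ℕ) - (m : ℕ), Nat.lt_of_le_of_lt (Nat.sub_le _ _) n.2⟩)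

/-- The `(N+1) × (N+1)` block matrix `[[Toep(u), x], [xᴴ, t]]`. -/
noncomputable def blockV (N : ℕ) (u x : Fin N → ℂ) (t : ℝ) :
    Matrix (Fin N ⊕ Unit) (Fin N ⊕ Unit) ℂ :=
  Matrix.fromBlocks (Toep N u) (Matrix.of fun i _ => x i)
    (Matrix.of fun _ j => star (x j)) (Matrix.of fun _ _ => (t : ℂ))

/-- The atomic norm `‖x‖_{𝒜_f}` over the atoms `𝒜_f = {d(φ) : φ ∈ [0,1)}`:
the infimum of `Σᵢ |αᵢ|` over finite representations `x = Σᵢ αᵢ d(φᵢ)`. -/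
noncomputable def atomicNormF (N : ℕ) (x : Fin N → ℂ) : ℝ :=
  sInf { s : ℝ | ∃ (K : ℕ) (α : Fin K → ℂ) (φ : Fin K → ℝ),
    (∀ i, φ i ∈ Set.Ico (0 : ℝ) 1) ∧ x = ∑ i, α i • dvec N (φ i) ∧
    s = ∑ i, ‖α i‖ }

/-- The value of the SDP
`inf { (1/(2N)) tr(Toep(u)) + t/2 : [[Toep(u), x], [xᴴ, t]] ⪰ 0 }`. -/
noncomputable def sdpValF (N : ℕ) (x : Fin N → ℂ) : ℝ :=
  sInf { v : ℝ | ∃ (u : Fin N → ℂ) (t : ℝ), (blockV N u x t).PosSemidef ∧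
    v = (Matrix.trace (Toep N u)).re / (2 * N) + t / 2 }


/-!
Write the positive semidefinite block matrix as the Gram matrix of vectors `g₀, …, g_{N-1}, h`.
The Toeplitz structure says `⟪g_{i+1}, g_{j+1}⟫ = ⟪g_i, g_j⟫`, so some unitary `W` satisfies
`g_k = W^k g₀`. Expanding in an orthonormal eigenbasis `(b_j, μ_j)` of `W` gives
`x_k = ⟪W^k g₀, h⟫ = ∑_j ⟪g₀, b_j⟫ ⟪b_j, h⟫ (conj μ_j)^k`, an atomic decomposition (this is the
Carathéodory–Toeplitz step). By AM–GM and Parseval its weight is at most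
`(‖g₀‖² + ‖h‖²) / 2 = tr Toep(u) / (2N) + t / 2`.
-/

open scoped InnerProductSpace ComplexConjugate

section RCLike

variable {𝕜 E : Type*} [RCLike 𝕜] [NormedAddCommGroup E] [InnerProductSpace 𝕜 E]

theorem OrthonormalBasis.sum_norm_inner_mul_inner_le {ι : Type*} [Fintype ι]
    (b : OrthonormalBasis ι 𝕜 E) (x y : E) :
    ∑ i, ‖⟪x, b i⟫_𝕜 * ⟪b i, y⟫_𝕜‖ ≤ (‖x‖ ^ 2 + ‖y‖ ^ 2) / 2 := by
  calc ∑ i, ‖⟪x, b i⟫_𝕜 * ⟪b i, y⟫_𝕜‖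
      ≤ ∑ i, (‖⟪x, b i⟫_𝕜‖ ^ 2 + ‖⟪b i, y⟫_𝕜‖ ^ 2) / 2 := by
        gcongr with i
        rw [norm_mul]
        nlinarith [two_mul_le_add_sq ‖⟪x, b i⟫_𝕜‖ ‖⟪b i, y⟫_𝕜‖]
    _ = (‖x‖ ^ 2 + ‖y‖ ^ 2) / 2 := by
        rw [← Finset.sum_div, Finset.sum_add_distrib, b.sum_sq_norm_inner_left,
          b.sum_sq_norm_inner_right]

theorem LinearIsometryEquiv.norm_eq_one_of_apply_eq_smul (W : E ≃ₗᵢ[𝕜] E) {v : E} {μ : 𝕜}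
    (hv : W v = μ • v) (hv0 : v ≠ 0) : ‖μ‖ = 1 := by
  have h := W.norm_map v
  rw [hv, norm_smul] at h
  exact (mul_eq_right₀ (norm_ne_zero_iff.mpr hv0)).mp h

theorem LinearIsometryEquiv.inner_pow_apply_of_apply_eq_smul (W : E ≃ₗᵢ[𝕜] E) {v : E} {μ : 𝕜}
    (hμ : ‖μ‖ = 1) (hv : W v = μ • v) (k : ℕ) (w : E) :
    ⟪(W ^ k) w, v⟫_𝕜 = conj μ ^ k * ⟪w, v⟫_𝕜 := by
  have hpow : (W ^ k) v = μ ^ k • v := by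
    induction k with
    | zero => simp
    | succ k ih => rw [pow_succ, LinearIsometryEquiv.coe_mul, Function.comp_apply, hv,
        map_smul, ih, smul_smul, ← pow_succ']
  have hunit : conj μ ^ k * μ ^ k = 1 := by
    rw [← mul_pow, RCLike.conj_mul, hμ]
    simp
  calc ⟪(W ^ k) w, v⟫_𝕜 = ⟪(W ^ k) w, (conj μ ^ k * μ ^ k) • v⟫_𝕜 := by rw [hunit, one_smul]
    _ = conj μ ^ k * ⟪w, v⟫_𝕜 := by
        rw [mul_smul, inner_smul_right, ← hpow, LinearIsometryEquiv.inner_map_map]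

theorem Matrix.PosSemidef.exists_eq_gram {n : Type*} [Fintype n] {M : Matrix n n 𝕜}
    (hM : M.PosSemidef) : ∃ v : n → EuclideanSpace 𝕜 n, M = gram 𝕜 v := by
  classical
  open scoped MatrixOrder in
  obtain ⟨B, rfl⟩ := CStarAlgebra.nonneg_iff_eq_star_mul_self.mp hM.nonneg
  refine ⟨fun j => WithLp.toLp 2 fun i => B i j, ?_⟩
  ext i j
  simp [gram_apply, mul_apply, PiLp.inner_apply, mul_comm]

variable [FiniteDimensional 𝕜 E]

theorem DirectSum.IsInternal.exists_orthonormalBasis_subordinate {ι : Type*} [DecidableEq ι]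
    {V : ι → Submodule 𝕜 E} (hV : DirectSum.IsInternal V)
    (hV' : OrthogonalFamily 𝕜 (fun i => V i) fun i => (V i).subtypeₗᵢ) :
    ∃ (b : OrthonormalBasis (Fin (Module.finrank 𝕜 E)) 𝕜 E) (σ : Fin (Module.finrank 𝕜 E) → ι),
      ∀ k, b k ∈ V (σ k) := by
  let := hV.submodule_iSupIndep.fintypeNeBotOfFiniteDimensional
  have hW := DirectSum.isInternal_ne_bot_iff.mpr hV
  have hW' := hV'.comp (f := fun i : {i // V i ≠ ⊥} => i.1) Subtype.val_injective
  exact ⟨hW.subordinateOrthonormalBasis rfl hW',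
    fun k => (hW.subordinateOrthonormalBasisIndex rfl k hW').1,
    fun k => hW.subordinateOrthonormalBasis_subordinate rfl k hW'⟩

theorem exists_linearIsometryEquiv_apply_eq_of_gram_eq {ι : Type*} [Fintype ι] {f g : ι → E}
    (h : gram 𝕜 f = gram 𝕜 g) : ∃ W : E ≃ₗᵢ[𝕜] E, ∀ i, W (f i) = g i := by
  classical
  set Lf := Fintype.linearCombination 𝕜 f
  set Lg := Fintype.linearCombination 𝕜 g
  have hfg (i j : ι) : ⟪f i, f j⟫_𝕜 = ⟪g i, g j⟫_𝕜 := by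
    simpa only [gram_apply] using congrFun₂ h i j
  have hnorm (a : ι → 𝕜) : ‖Lf a‖ = ‖Lg a‖ := by
    have hinner : ⟪Lf a, Lf a⟫_𝕜 = ⟪Lg a, Lg a⟫_𝕜 := by
      simp only [Lf, Lg, Fintype.linearCombination_apply, sum_inner, inner_sum, inner_smul_left,
        inner_smul_right, hfg]
    rw [@norm_eq_sqrt_re_inner 𝕜, @norm_eq_sqrt_re_inner 𝕜, hinner]
  have hker : LinearMap.ker Lf ≤ LinearMap.ker Lg := fun a ha => by
    rw [LinearMap.mem_ker, ← norm_eq_zero, ← hnorm, norm_eq_zero, ← LinearMap.mem_ker]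
    exact ha
  set L : LinearMap.range Lf →ₗ[𝕜] E :=
    (LinearMap.ker Lf).liftQ Lg hker ∘ₗ Lf.quotKerEquivRange.symm.toLinearMap
  have hL (a : ι → 𝕜) : L ⟨Lf a, LinearMap.mem_range_self Lf a⟩ = Lg a := by
    simp [L, LinearMap.quotKerEquivRange_symm_apply_image]
  let Li : LinearMap.range Lf →ₗᵢ[𝕜] E := ⟨L, by
    rintro ⟨_, a, rfl⟩
    rw [hL, ← hnorm]
    rfl⟩
  refine ⟨Li.extend.toLinearIsometryEquiv rfl, fun i => ?_⟩
  have hf : f i = Lf (Pi.single i 1) := by simp [Lf]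
  have hg : g i = Lg (Pi.single i 1) := by simp [Lg]
  rw [LinearIsometry.coe_toLinearIsometryEquiv, hf,
    show Lf (Pi.single i 1) = ((⟨_, LinearMap.mem_range_self Lf _⟩ : LinearMap.range Lf) : E)
      from rfl, LinearIsometry.extend_apply, hg]
  exact hL _

theorem exists_linearIsometryEquiv_pow_apply_of_inner_succ {N : ℕ} (g : Fin (N + 1) → E)
    (h : ∀ i j : Fin N, ⟪g i.succ, g j.succ⟫_𝕜 = ⟪g i.castSucc, g j.castSucc⟫_𝕜) :
    ∃ W : E ≃ₗᵢ[𝕜] E, ∀ k : Fin (N + 1), g k = (W ^ (k : ℕ)) (g 0) := by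
  obtain ⟨W, hW⟩ := exists_linearIsometryEquiv_apply_eq_of_gram_eq
    (f := g ∘ Fin.castSucc) (g := g ∘ Fin.succ) (by ext i j; exact (h i j).symm)
  refine ⟨W, Fin.induction (by simp) fun k hk => ?_⟩
  rw [Fin.val_succ, pow_succ', LinearIsometryEquiv.coe_mul, Function.comp_apply,
    ← Fin.val_castSucc, ← hk]
  exact (hW k).symm

end RCLike

/-- `W + W⁻¹` and `i (W⁻¹ - W)` are commuting self-adjoint operators, and a joint eigenvector
for the eigenvalues `(β, α)` is an eigenvector of `W` for `(α + i β) / 2`. -/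
theorem LinearIsometryEquiv.exists_orthonormalBasis_eigenvectors {E : Type*}
    [NormedAddCommGroup E] [InnerProductSpace ℂ E] [FiniteDimensional ℂ E] (W : E ≃ₗᵢ[ℂ] E) :
    ∃ (b : OrthonormalBasis (Fin (Module.finrank ℂ E)) ℂ E) (μ : Fin (Module.finrank ℂ E) → ℂ),
      ∀ k, W (b k) = μ k • b k := by
  set U : E →ₗ[ℂ] E := W.toLinearEquiv.toLinearMap
  set V : E →ₗ[ℂ] E := W.symm.toLinearEquiv.toLinearMap
  have hUV : U * V = 1 := LinearMap.ext W.apply_symm_apply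
  have hVU : V * U = 1 := LinearMap.ext W.symm_apply_apply
  have hA : (U + V).IsSymmetric := fun x y => by
    simp [U, V, inner_add_left, inner_add_right, W.inner_map_eq_flip, W.symm.inner_map_eq_flip,
      add_comm]
  have hB : (Complex.I • (V - U)).IsSymmetric := fun x y => by
    simp [U, V, inner_sub_left, inner_sub_right, inner_smul_left, inner_smul_right,
      W.inner_map_eq_flip, W.symm.inner_map_eq_flip]
    ring
  have hAB : Commute (U + V) (Complex.I • (V - U)) := by
    refine (Commute.sub_right ?_ ?_).smul_right _ <;>
      simp [Commute, SemiconjBy, add_mul, mul_add, hUV, hVU]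
  obtain ⟨b, σ, hb⟩ :=
    (hA.directSum_isInternal_of_commute hB hAB).exists_orthonormalBasis_subordinate
      (hA.orthogonalFamily_eigenspace_inf_eigenspace hB)
  refine ⟨b, fun k => ((σ k).2 + Complex.I * (σ k).1) / 2, fun k => ?_⟩
  obtain ⟨hα, hβ⟩ := Submodule.mem_inf.mp (hb k)
  rw [Module.End.mem_eigenspace_iff] at hα hβ
  have h2W : (2 : ℂ) • W (b k) = (U + V) (b k) + Complex.I • (Complex.I • (V - U)) (b k) := by
    simp only [LinearMap.add_apply, LinearMap.smul_apply, LinearMap.sub_apply, smul_smul,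
      Complex.I_mul_I, U, V]
    module
  rw [hα, hβ, smul_smul, ← add_smul] at h2W
  dsimp only
  rw [div_eq_inv_mul, mul_smul, ← h2W, smul_smul, inv_mul_cancel₀ two_ne_zero, one_smul]

theorem exists_dvec_eq_pow {z : ℂ} (hz : ‖z‖ = 1) (N : ℕ) :
    ∃ θ ∈ Set.Ico (0 : ℝ) 1, dvec N θ = fun n : Fin N => z ^ (n : ℕ) := by
  set θ := Int.fract (z.arg / (2 * π))
  refine ⟨θ, ⟨Int.fract_nonneg _, Int.fract_lt_one _⟩, ?_⟩
  have hexp : Complex.exp (Complex.I * (2 * π * θ)) = z := by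
    have hθ : Complex.I * (2 * π * θ)
        = z.arg * Complex.I - ⌊z.arg / (2 * π)⌋ * (2 * π * Complex.I) := by
      simp only [θ, Int.fract]
      push_cast
      field_simp
    rw [hθ, Complex.exp_sub, Complex.exp_int_mul_two_pi_mul_I, div_one]
    simpa [hz] using Complex.norm_mul_exp_arg_mul_I z
  funext n
  rw [dvec, ← hexp, ← Complex.exp_nat_mul]
  congr 1
  push_cast
  ring

theorem atomicNormF_le_sum_norm {N K : ℕ} {x : Fin N → ℂ} (α : Fin K → ℂ) (φ : Fin K → ℝ)
    (hφ : ∀ i, φ i ∈ Set.Ico (0 : ℝ) 1) (hx : x = ∑ i, α i • dvec N (φ i)) :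
    atomicNormF N x ≤ ∑ i, ‖α i‖ := by
  refine csInf_le ⟨0, ?_⟩ ⟨K, α, φ, hφ, hx, rfl⟩
  rintro s ⟨K, α, φ, -, -, rfl⟩
  positivity

theorem atomicNormF_le_of_eq_inner_pow {E : Type*} [NormedAddCommGroup E]
    [InnerProductSpace ℂ E] [FiniteDimensional ℂ E] {N : ℕ} {x : Fin N → ℂ} (W : E ≃ₗᵢ[ℂ] E)
    (g h : E) (hx : ∀ k : Fin N, x k = ⟪(W ^ (k : ℕ)) g, h⟫_ℂ) :
    atomicNormF N x ≤ (‖g‖ ^ 2 + ‖h‖ ^ 2) / 2 := by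
  obtain ⟨b, μ, hb⟩ := W.exists_orthonormalBasis_eigenvectors
  have hμ (j) : ‖μ j‖ = 1 := W.norm_eq_one_of_apply_eq_smul (hb j) (b.orthonormal.ne_zero j)
  choose θ hθ hdθ using fun j => exists_dvec_eq_pow (z := conj (μ j)) (by simpa using hμ j) N
  refine (atomicNormF_le_sum_norm (fun j => ⟪g, b j⟫_ℂ * ⟪b j, h⟫_ℂ) θ hθ ?_).trans
    (b.sum_norm_inner_mul_inner_le g h)
  funext k
  rw [hx, ← b.sum_inner_mul_inner, Finset.sum_apply]
  refine Finset.sum_congr rfl fun j _ => ?_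
  rw [W.inner_pow_apply_of_apply_eq_smul (hμ j) (hb j), Pi.smul_apply, hdθ, smul_eq_mul]
  ring

theorem exists_inner_eq_of_blockV_posSemidef {N : ℕ} {u x : Fin N → ℂ} {t : ℝ}
    (h : (blockV N u x t).PosSemidef) :
    ∃ (g : Fin N → EuclideanSpace ℂ (Fin N ⊕ Unit)) (w : EuclideanSpace ℂ (Fin N ⊕ Unit)),
      (∀ i j, Toep N u i j = ⟪g i, g j⟫_ℂ) ∧ (∀ i, x i = ⟪g i, w⟫_ℂ) ∧ t = ‖w‖ ^ 2 := by
  obtain ⟨v, hv⟩ := h.exists_eq_gram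
  have hentry (i j) : blockV N u x t i j = ⟪v i, v j⟫_ℂ := by rw [hv, gram_apply]
  have ht : (t : ℂ) = ‖v (.inr ())‖ ^ 2 := by
    simpa [blockV, inner_self_eq_norm_sq_to_K] using hentry (.inr ()) (.inr ())
  exact ⟨v ∘ Sum.inl, v (.inr ()), fun i j => hentry (.inl i) (.inl j),
    fun i => hentry (.inl i) (.inr ()), by exact_mod_cast ht⟩

theorem Toep_succ_succ {N : ℕ} (u : Fin (N + 1) → ℂ) (i j : Fin N) :
    Toep (N + 1) u i.succ j.succ = Toep (N + 1) u i.castSucc j.castSucc := by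
  simp [Toep, Nat.succ_sub_succ]

theorem trace_Toep {N : ℕ} (u : Fin (N + 1) → ℂ) : trace (Toep (N + 1) u) = (N + 1) * u 0 := by
  simp [trace, Toep]

/-- **lower bound in the SDP characterization of the vector atomic
norm.** If `[[Toep(u), x], [xᴴ, t]]` is positive semidefinite, then
`‖x‖_{𝒜_f} ≤ (1/(2N)) tr(Toep(u)) + t/2`. -/
theorem sdp_lower_bound_vector (N : ℕ) (x u : Fin N → ℂ) (t : ℝ)
    (hpsd : (blockV N u x t).PosSemidef) :
    atomicNormF N x ≤ (Matrix.trace (Toep N u)).re / (2 * N) + t / 2 := by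
  obtain ⟨g, w, hT, hx, rfl⟩ := exists_inner_eq_of_blockV_posSemidef hpsd
  rcases N with _ | N
  · calc atomicNormF 0 x ≤ 0 := by
          simpa using atomicNormF_le_sum_norm (K := 0) Fin.elim0 Fin.elim0 (fun i => i.elim0)
            (Subsingleton.elim _ _)
      _ ≤ _ := by simp only [CharP.cast_eq_zero, mul_zero, div_zero, zero_add]; positivity
  obtain ⟨W, hW⟩ := exists_linearIsometryEquiv_pow_apply_of_inner_succ g
    fun i j => by rw [← hT, ← hT, Toep_succ_succ]
  have htr : (trace (Toep (N + 1) u)).re = (N + 1) * ‖g 0‖ ^ 2 := by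
    rw [trace_Toep, show u 0 = Toep (N + 1) u 0 0 by simp [Toep], hT,
      inner_self_eq_norm_sq_to_K]
    simp [← Complex.ofReal_pow]
  calc atomicNormF (N + 1) x ≤ (‖g 0‖ ^ 2 + ‖w‖ ^ 2) / 2 :=
        atomicNormF_le_of_eq_inner_pow W _ _ fun k => by rw [hx, ← hW]
    _ = _ := by
        rw [htr]
        field_simp
        push_cast
        ring
end

section
/- Lower bound in the SDP characterization of the matrix atomic norm: Let X ∈ ℂ^{L×N}, u ∈ ℂ^N, and let T ∈ ℂ^{L×L} be Hermitian, such that the block matrix [[Toep(u), X^H], [X, T]] ∈ ℂ^{(N+L)×(N+L)} is positive semidefinite. Then ‖X‖_{𝒜_n} ≤ (1/(2N)) trace(Toep(u)) + (1/2) trace(T). -/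
open Real Matrix ComplexOrder

/-- The `(N+L) × (N+L)` block matrix `[[Toep(u), Xᴴ], [X, T]]`. -/
noncomputable def blockN (N L : ℕ) (u : Fin N → ℂ) (X : Matrix (Fin L) (Fin N) ℂ)
    (T : Matrix (Fin L) (Fin L) ℂ) : Matrix (Fin N ⊕ Fin L) (Fin N ⊕ Fin L) ℂ :=
  Matrix.fromBlocks (Toep N u) Xᴴ X T

/-- The rank-one atom `z d(φ)ᴴ ∈ ℂ^{L×N}`. -/
noncomputable def atomMat (N L : ℕ) (z : EuclideanSpace ℂ (Fin L)) (φ : ℝ) :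
    Matrix (Fin L) (Fin N) ℂ :=
  Matrix.of fun l n => z l * star (dvec N φ n)

/-- The matrix atomic norm `‖X‖_{𝒜_n}` over the atoms
`𝒜_n = { z d(φ)ᴴ : φ ∈ [0,1), ‖z‖₂ = 1 }`: the infimum of `Σᵢ |βᵢ|` over finite
representations `X = Σᵢ βᵢ zᵢ d(φᵢ)ᴴ`. -/
noncomputable def atomicNormN (N L : ℕ) (X : Matrix (Fin L) (Fin N) ℂ) : ℝ :=
  sInf { s : ℝ | ∃ (K : ℕ) (β : Fin K → ℂ) (z : Fin K → EuclideanSpace ℂ (Fin L))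
    (φ : Fin K → ℝ), (∀ i, ‖z i‖ = 1) ∧ (∀ i, φ i ∈ Set.Ico (0 : ℝ) 1) ∧
    X = ∑ i, β i • atomMat N L (z i) (φ i) ∧ s = ∑ i, ‖β i‖ }

/-- The value of the SDP
`inf { (1/(2N)) tr(Toep(u)) + (1/2) tr(T) : T Hermitian, [[Toep(u), Xᴴ], [X, T]] ⪰ 0 }`. -/
noncomputable def sdpValN (N L : ℕ) (X : Matrix (Fin L) (Fin N) ℂ) : ℝ :=
  sInf { v : ℝ | ∃ (u : Fin N → ℂ) (T : Matrix (Fin L) (Fin L) ℂ), T.IsHermitian ∧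
    (blockN N L u X T).PosSemidef ∧
    v = (Matrix.trace (Toep N u)).re / (2 * N) + (Matrix.trace T).re / 2 }

/-!
Write the positive semidefinite block matrix as the Gram matrix of vectors
`a₀, …, a_{N-1}, g₁, …, g_L`. Since `Toep u` is Toeplitz, `(a₀, …, a_{N-2})` and
`(a₁, …, a_{N-1})` have the same Gram matrix, so some unitary `U` sends `a_k ↦ a_{k+1}`.
Expanding in an orthonormal eigenbasis `(b_j)` of `U`, with eigenvalues `μ_j = e^{-2πiφ_j}`,
gives `a_k = Σ_j μ_j^k ⟪b_j, a₀⟫ b_j` and hence `X = Σ_j ⟪b_j, a₀⟫ h_j d(φ_j)ᴴ` with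
`(h_j)_l = ⟪g_l, b_j⟫`. By AM-GM and Parseval,
`Σ_j |⟪b_j, a₀⟫| ‖h_j‖ ≤ (‖a₀‖² + Σ_l ‖g_l‖²) / 2 = tr(Toep u) / (2N) + tr(T) / 2`.
-/

open scoped InnerProductSpace
open Module.End

section Gram

variable {𝕜 E ι : Type*} [RCLike 𝕜] [NormedAddCommGroup E] [InnerProductSpace 𝕜 E] [Fintype ι]

theorem Matrix.PosSemidef.exists_gram_eq {A : Matrix ι ι 𝕜} (hA : A.PosSemidef) :
    ∃ v : ι → EuclideanSpace 𝕜 ι, gram 𝕜 v = A := by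
  classical
  obtain ⟨C, rfl⟩ : ∃ C : Matrix ι ι 𝕜, A = Cᴴ * C := by
    open scoped MatrixOrder in
    exact CStarAlgebra.nonneg_iff_eq_star_mul_self.mp hA.nonneg
  refine ⟨fun j => WithLp.toLp 2 fun i => C i j, ?_⟩
  ext i j
  simp [Matrix.mul_apply, PiLp.inner_apply, mul_comm]

theorem re_trace_gram (v : ι → E) : RCLike.re (gram 𝕜 v).trace = ∑ i, ‖v i‖ ^ 2 := by
  simp [Matrix.trace]

theorem inner_linearCombination_eq_of_gram_eq {v w : ι → E} (h : gram 𝕜 v = gram 𝕜 w)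
    (c d : ι → 𝕜) :
    ⟪Fintype.linearCombination 𝕜 v c, Fintype.linearCombination 𝕜 v d⟫_𝕜 =
      ⟪Fintype.linearCombination 𝕜 w c, Fintype.linearCombination 𝕜 w d⟫_𝕜 := by
  have hvw (i j : ι) : ⟪v i, v j⟫_𝕜 = ⟪w i, w j⟫_𝕜 := by simpa using congr($h i j)
  simp only [Fintype.linearCombination_apply, sum_inner, inner_sum, inner_smul_left,
    inner_smul_right, hvw]

theorem exists_linearIsometry_apply_eq_of_gram_eq [FiniteDimensional 𝕜 E] {v w : ι → E}
    (h : gram 𝕜 v = gram 𝕜 w) : ∃ U : E →ₗᵢ[𝕜] E, ∀ i, U (v i) = w i := by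
  classical
  set F := Fintype.linearCombination 𝕜 v
  set G := Fintype.linearCombination 𝕜 w
  have hnorm (c : ι → 𝕜) : ‖G c‖ = ‖F c‖ := by
    rw [@norm_eq_sqrt_re_inner 𝕜, @norm_eq_sqrt_re_inner 𝕜,
      inner_linearCombination_eq_of_gram_eq h]
  have hker : LinearMap.ker F ≤ LinearMap.ker G := fun c hc => by
    rw [LinearMap.mem_ker, ← norm_eq_zero] at hc ⊢
    rwa [hnorm]
  -- `F c ↦ G c` is well defined on the range of `F`, isometric there, and extends to all of `E`
  let ψ : LinearMap.range F →ₗ[𝕜] E :=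
    (LinearMap.ker F).liftQ G hker ∘ₗ F.quotKerEquivRange.symm.toLinearMap
  have hψ (c : ι → 𝕜) : ψ ⟨F c, LinearMap.mem_range_self F c⟩ = G c := by
    simp [ψ, LinearMap.quotKerEquivRange_symm_apply_image]
  let ψ' : LinearMap.range F →ₗᵢ[𝕜] E := ⟨ψ, by rintro ⟨_, c, rfl⟩; simp [hψ, hnorm]⟩
  refine ⟨ψ'.extend, fun i => ?_⟩
  have hi := ψ'.extend_apply ⟨F (Pi.single i 1), LinearMap.mem_range_self F _⟩
  rw [show ψ' _ = G (Pi.single i 1) from hψ _] at hi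
  simpa [F, G] using hi

theorem OrthonormalBasis.sum_norm_inner_mul_norm_le {κ : Type*} [Fintype κ]
    (b : OrthonormalBasis ι 𝕜 E) (x : E) (g : κ → E) :
    ∑ i, ‖⟪b i, x⟫_𝕜‖ * ‖(WithLp.toLp 2 fun l => ⟪g l, b i⟫_𝕜 : EuclideanSpace 𝕜 κ)‖ ≤
      (‖x‖ ^ 2 + ∑ l, ‖g l‖ ^ 2) / 2 := by
  set col : ι → EuclideanSpace 𝕜 κ := fun i => WithLp.toLp 2 fun l => ⟪g l, b i⟫_𝕜
  have hcols : ∑ i, ‖col i‖ ^ 2 = ∑ l, ‖g l‖ ^ 2 := by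
    simp_rw [col, EuclideanSpace.norm_sq_eq]
    rw [Finset.sum_comm]
    simp_rw [b.sum_sq_norm_inner_left]
  calc _ ≤ ∑ i, (‖⟪b i, x⟫_𝕜‖ ^ 2 + ‖col i‖ ^ 2) / 2 :=
        Finset.sum_le_sum fun i _ => by linarith [two_mul_le_add_sq ‖⟪b i, x⟫_𝕜‖ ‖col i‖]
    _ = _ := by rw [← Finset.sum_div, Finset.sum_add_distrib, b.sum_sq_norm_inner_right, hcols]

end Gram

namespace LinearIsometry

variable {E : Type*} [NormedAddCommGroup E] [InnerProductSpace ℂ E] (U : E →ₗᵢ[ℂ] E)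

theorem norm_eq_one_of_apply_eq_smul {μ : ℂ} {x : E} (hx : x ≠ 0) (h : U x = μ • x) :
    ‖μ‖ = 1 := by
  have := U.norm_map x
  rw [h, norm_smul] at this
  exact (mul_eq_right₀ (norm_ne_zero_iff.mpr hx)).mp this

theorem orthogonalFamily_eigenspaces :
    OrthogonalFamily ℂ (fun μ => eigenspace U.toLinearMap μ)
      fun μ => (eigenspace U.toLinearMap μ).subtypeₗᵢ := by
  rintro μ ν hμν ⟨x, hx⟩ ⟨y, hy⟩
  rw [mem_eigenspace_iff] at hx hy
  by_cases hx0 : x = 0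
  · simp [hx0]
  have hμ := U.norm_eq_one_of_apply_eq_smul hx0 hx
  have hinner : ⟪x, y⟫_ℂ = (starRingEnd ℂ) μ * ν * ⟪x, y⟫_ℂ := by
    rw [mul_assoc, ← inner_smul_right, ← inner_smul_left, ← hx, ← hy]
    exact (U.inner_map_map x y).symm
  -- `conj μ = μ⁻¹` on the unit circle, so `conj μ * ν ≠ 1`
  have hne : (starRingEnd ℂ) μ * ν ≠ 1 := by
    intro h1
    have : μ * (starRingEnd ℂ) μ = 1 := by
      rw [Complex.mul_conj, Complex.normSq_eq_norm_sq, hμ]; norm_num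
    exact hμν (by linear_combination ν * this - μ * h1)
  simpa using (mul_left_eq_self₀.mp hinner.symm).resolve_left hne

theorem map_mem_orthogonal_eigenspace {μ : ℂ} {v : E}
    (hv : v ∈ (eigenspace U.toLinearMap μ)ᗮ) : U v ∈ (eigenspace U.toLinearMap μ)ᗮ := by
  intro w hw
  rw [mem_eigenspace_iff] at hw
  by_cases hμ : μ = 0
  · have : U w = 0 := by simpa [hμ] using hw
    simp [(map_eq_zero_iff U U.injective).mp this]
  have hw' : w = U (μ⁻¹ • w) := by
    rw [U.map_smul, ← U.coe_toLinearMap, hw, smul_smul, inv_mul_cancel₀ hμ, one_smul]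
  rw [hw', U.inner_map_map, inner_smul_left, hv _ (by simpa using hw), mul_zero]

theorem orthogonalComplement_iSup_eigenspaces_eq_bot [FiniteDimensional ℂ E] :
    (⨆ μ, eigenspace U.toLinearMap μ)ᗮ = ⊥ := by
  have hp : ∀ v ∈ (⨆ μ, eigenspace U.toLinearMap μ)ᗮ,
      U v ∈ (⨆ μ, eigenspace U.toLinearMap μ)ᗮ := by
    simp_rw [← Submodule.iInf_orthogonal, Submodule.mem_iInf]
    exact fun v hv μ => U.map_mem_orthogonal_eigenspace (hv μ)
  by_contra hne
  have : Nontrivial (⨆ μ, eigenspace U.toLinearMap μ)ᗮ :=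
    Submodule.nontrivial_iff_ne_bot.mpr hne
  obtain ⟨μ, hμ⟩ := exists_eigenvalue (U.toLinearMap.restrict hp)
  exact hμ (eigenspace_restrict_eq_bot hp
    ((Submodule.isOrtho_orthogonal_right _).mono_left (le_iSup _ μ)).disjoint)

theorem exists_orthonormalBasis_apply_eq_smul [FiniteDimensional ℂ E] :
    ∃ (b : OrthonormalBasis (Fin (Module.finrank ℂ E)) ℂ E) (μ : Fin (Module.finrank ℂ E) → ℂ),
      ∀ i, U (b i) = μ i • b i := by
  have hV : OrthogonalFamily ℂ (fun μ : Eigenvalues U.toLinearMap => eigenspace U.toLinearMap μ)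
      fun μ => (eigenspace U.toLinearMap μ).subtypeₗᵢ :=
    U.orthogonalFamily_eigenspaces.comp Subtype.coe_injective
  have hint : DirectSum.IsInternal
      fun μ : Eigenvalues U.toLinearMap => eigenspace U.toLinearMap μ := by
    refine hV.isInternal_iff.mpr ?_
    show (⨆ μ : { μ // eigenspace U.toLinearMap μ ≠ ⊥ }, eigenspace U.toLinearMap μ)ᗮ = ⊥
    rw [iSup_ne_bot_subtype, U.orthogonalComplement_iSup_eigenspaces_eq_bot]
  let eigenvalue (i : Fin (Module.finrank ℂ E)) : Eigenvalues U.toLinearMap :=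
    hint.subordinateOrthonormalBasisIndex rfl i hV
  exact ⟨hint.subordinateOrthonormalBasis rfl hV, fun i => eigenvalue i,
    fun i => mem_eigenspace_iff.mp (hint.subordinateOrthonormalBasis_subordinate rfl i hV)⟩

theorem iterate_apply_eq_sum {ι : Type*} [Fintype ι] {b : OrthonormalBasis ι ℂ E} {μ : ι → ℂ}
    (hb : ∀ i, U (b i) = μ i • b i) (k : ℕ) (x : E) :
    (⇑U)^[k] x = ∑ i, (μ i ^ k * ⟪b i, x⟫_ℂ) • b i := by
  induction k with
  | zero => simpa using (b.sum_repr' x).symm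
  | succ k ih =>
    rw [Function.iterate_succ_apply', ih, map_sum]
    simp only [map_smul, hb, smul_smul]
    congr! 2
    ring

end LinearIsometry

section Toeplitz

theorem toep_castSucc_castSucc {M : ℕ} (u : Fin (M + 1) → ℂ) (j k : Fin M) :
    Toep (M + 1) u j.castSucc k.castSucc = Toep (M + 1) u j.succ k.succ := by
  simp only [Toep, of_apply, Fin.val_succ, Fin.val_castSucc, Nat.add_sub_add_right,
    Nat.add_le_add_iff_right]

theorem trace_toep {M : ℕ} (u : Fin (M + 1) → ℂ) : (Toep (M + 1) u).trace = (M + 1) * u 0 := by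
  simp [Matrix.trace, Toep]

variable {E : Type*} [NormedAddCommGroup E] [InnerProductSpace ℂ E]

theorem re_trace_toep_eq_of_gram_eq {M : ℕ} {a : Fin (M + 1) → E} {u : Fin (M + 1) → ℂ}
    (ha : gram ℂ a = Toep (M + 1) u) : (Toep (M + 1) u).trace.re = (M + 1) * ‖a 0‖ ^ 2 := by
  have hu : u 0 = ⟪a 0, a 0⟫_ℂ := by rw [← gram_apply (𝕜 := ℂ), ha]; simp [Toep]
  rw [trace_toep, hu, inner_self_eq_norm_sq_to_K]
  simp [← Complex.ofReal_pow]

theorem exists_orthonormalBasis_eq_sum_pow_smul_of_gram_eq_toep [FiniteDimensional ℂ E] {M : ℕ}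
    {a : Fin (M + 1) → E} {u : Fin (M + 1) → ℂ} (ha : gram ℂ a = Toep (M + 1) u) :
    ∃ (b : OrthonormalBasis (Fin (Module.finrank ℂ E)) ℂ E) (μ : Fin (Module.finrank ℂ E) → ℂ),
      (∀ i, ‖μ i‖ = 1) ∧ ∀ k : Fin (M + 1), a k = ∑ i, (μ i ^ (k : ℕ) * ⟪b i, a 0⟫_ℂ) • b i := by
  have hshift : gram ℂ (a ∘ Fin.castSucc) = gram ℂ (a ∘ Fin.succ) := by
    ext j k
    simpa [← ha] using toep_castSucc_castSucc u j k
  obtain ⟨U, hU⟩ := exists_linearIsometry_apply_eq_of_gram_eq hshift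
  obtain ⟨b, μ, hb⟩ := U.exists_orthonormalBasis_apply_eq_smul
  refine ⟨b, μ, fun i => U.norm_eq_one_of_apply_eq_smul (b.orthonormal.ne_zero i) (hb i),
    fun k => ?_⟩
  have horbit : ∀ k : Fin (M + 1), (⇑U)^[k] (a 0) = a k :=
    Fin.induction rfl fun k ih => by
      rw [Fin.val_succ, Function.iterate_succ_apply', ← Fin.val_castSucc, ih]
      exact hU k
  rw [← horbit k, U.iterate_apply_eq_sum hb]

end Toeplitz

section AtomicNorm

theorem exists_mem_Ico_star_dvec_eq_pow (N : ℕ) {μ : ℂ} (hμ : ‖μ‖ = 1) :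
    ∃ φ ∈ Set.Ico (0 : ℝ) 1, ∀ n : Fin N, star (dvec N φ n) = μ ^ (n : ℕ) := by
  set t := -μ.arg / (2 * π)
  refine ⟨Int.fract t, ⟨Int.fract_nonneg t, Int.fract_lt_one t⟩, fun n => ?_⟩
  have hφ : -(2 * π * Int.fract t) = μ.arg + ⌊t⌋ * (2 * π) := by
    rw [Int.fract]; simp only [t]; field_simp; ring
  have hμ' : Complex.exp (μ.arg * Complex.I) = μ := by
    simpa [hμ] using Complex.norm_mul_exp_arg_mul_I μ
  calc star (dvec N (Int.fract t) n)
      = Complex.exp ((n : ℕ) * ((-(2 * π * Int.fract t) : ℝ) * Complex.I)) := by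
        simp only [dvec, Complex.star_def, ← Complex.exp_conj, map_mul, Complex.conj_I, map_ofNat,
          Complex.conj_ofReal]
        push_cast; ring_nf
    _ = Complex.exp (μ.arg * Complex.I) ^ (n : ℕ)
          * Complex.exp (((n : ℕ) * ⌊t⌋ : ℤ) * (2 * π * Complex.I)) := by
        rw [hφ, ← Complex.exp_nat_mul, ← Complex.exp_add]; push_cast; ring_nf
    _ = μ ^ (n : ℕ) := by rw [Complex.exp_int_mul_two_pi_mul_I, mul_one, hμ']

theorem atomicNormN_le {N L K : ℕ} (β : Fin K → ℂ) (z : Fin K → EuclideanSpace ℂ (Fin L))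
    (φ : Fin K → ℝ) (hz : ∀ i, ‖z i‖ = 1) (hφ : ∀ i, φ i ∈ Set.Ico (0 : ℝ) 1) :
    atomicNormN N L (∑ i, β i • atomMat N L (z i) (φ i)) ≤ ∑ i, ‖β i‖ :=
  csInf_le ⟨0, by rintro _ ⟨K, β, z, φ, -, -, -, rfl⟩; positivity⟩ ⟨K, β, z, φ, hz, hφ, rfl, rfl⟩

theorem exists_norm_eq_one_smul_eq {E : Type*} [NormedAddCommGroup E] [NormedSpace ℂ E]
    [Nontrivial E] (w : E) : ∃ z : E, ‖z‖ = 1 ∧ (‖w‖ : ℂ) • z = w := by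
  by_cases hw : w = 0
  · obtain ⟨z, hz⟩ := exists_norm_eq E zero_le_one
    exact ⟨z, hz, by simp [hw]⟩
  · refine ⟨(‖w‖ : ℂ)⁻¹ • w, norm_smul_inv_norm hw, ?_⟩
    rw [smul_smul, mul_inv_cancel₀ (by simpa using hw), one_smul]

theorem atomicNormN_le_sum_norm_of_eq_sum_pow {N L K : ℕ} {X : Matrix (Fin L) (Fin N) ℂ}
    (w : Fin K → EuclideanSpace ℂ (Fin L)) {μ : Fin K → ℂ} (hμ : ∀ i, ‖μ i‖ = 1)
    (hX : ∀ l n, X l n = ∑ i, w i l * μ i ^ (n : ℕ)) :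
    atomicNormN N L X ≤ ∑ i, ‖w i‖ := by
  rcases L.eq_zero_or_pos with rfl | hL
  -- `ℂ⁰` has no unit vectors, but then `X` is the empty sum of atoms
  · have hX0 : X = ∑ i : Fin 0, (0 : ℂ) • atomMat N 0 0 0 := by
      ext l; exact l.elim0
    rw [hX0]
    exact (atomicNormN_le (fun _ => 0) (fun _ => 0) (fun _ => 0) (fun i => i.elim0)
      (fun i => i.elim0)).trans (by simp; positivity)
  have : Nonempty (Fin L) := ⟨⟨0, hL⟩⟩
  choose z hz hzw using fun i => exists_norm_eq_one_smul_eq (w i)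
  choose φ hφ hdvec using fun i => exists_mem_Ico_star_dvec_eq_pow N (hμ i)
  have hX' : X = ∑ i, (‖w i‖ : ℂ) • atomMat N L (z i) (φ i) := by
    ext l n
    simp only [hX, Matrix.sum_apply, Matrix.smul_apply, atomMat, of_apply, hdvec, smul_eq_mul,
      ← mul_assoc]
    congr! 2 with i
    simpa using congr($(hzw i) l).symm
  rw [hX']
  exact (atomicNormN_le _ z φ hz hφ).trans_eq (by simp)

theorem atomicNormN_le_of_gram_eq_toep {E : Type*} [NormedAddCommGroup E]
    [InnerProductSpace ℂ E] [FiniteDimensional ℂ E] {M L : ℕ} {X : Matrix (Fin L) (Fin (M + 1)) ℂ}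
    {u : Fin (M + 1) → ℂ} {a : Fin (M + 1) → E} {g : Fin L → E}
    (ha : gram ℂ a = Toep (M + 1) u) (hX : ∀ l n, X l n = ⟪g l, a n⟫_ℂ) :
    atomicNormN (M + 1) L X ≤ (‖a 0‖ ^ 2 + ∑ l, ‖g l‖ ^ 2) / 2 := by
  obtain ⟨b, μ, hμ, hab⟩ := exists_orthonormalBasis_eq_sum_pow_smul_of_gram_eq_toep ha
  set h : _ → EuclideanSpace ℂ (Fin L) := fun i => WithLp.toLp 2 fun l => ⟪g l, b i⟫_ℂ
  have hX' (l n) : X l n = ∑ i, (⟪b i, a 0⟫_ℂ • h i) l * μ i ^ (n : ℕ) := by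
    rw [hX, hab n, inner_sum]
    refine Finset.sum_congr rfl fun i _ => ?_
    simp only [inner_smul_right, h, PiLp.smul_apply, smul_eq_mul]
    ring
  calc atomicNormN (M + 1) L X ≤ ∑ i, ‖⟪b i, a 0⟫_ℂ • h i‖ :=
        atomicNormN_le_sum_norm_of_eq_sum_pow _ hμ hX'
    _ = ∑ i, ‖⟪b i, a 0⟫_ℂ‖ * ‖h i‖ := by simp_rw [norm_smul]
    _ ≤ (‖a 0‖ ^ 2 + ∑ l, ‖g l‖ ^ 2) / 2 := b.sum_norm_inner_mul_norm_le (a 0) g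

end AtomicNorm

theorem exists_gram_eq_of_posSemidef_blockN {N L : ℕ} {u : Fin N → ℂ}
    {X : Matrix (Fin L) (Fin N) ℂ} {T : Matrix (Fin L) (Fin L) ℂ}
    (hpsd : (blockN N L u X T).PosSemidef) :
    ∃ (a : Fin N → EuclideanSpace ℂ (Fin N ⊕ Fin L)) (g : Fin L → EuclideanSpace ℂ (Fin N ⊕ Fin L)),
      gram ℂ a = Toep N u ∧ gram ℂ g = T ∧ ∀ l n, X l n = ⟪g l, a n⟫_ℂ := by
  obtain ⟨v, hv⟩ := hpsd.exists_gram_eq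
  have hblock (i j) : ⟪v i, v j⟫_ℂ = blockN N L u X T i j := by rw [← hv]; rfl
  refine ⟨fun n => v (Sum.inl n), fun l => v (Sum.inr l), ?_, ?_, fun l n => ?_⟩
  · ext; simp [hblock, blockN]
  · ext; simp [hblock, blockN]
  · simp [hblock, blockN]

theorem sdp_lower_bound_matrix_general (N L : ℕ) (X : Matrix (Fin L) (Fin N) ℂ)
    (u : Fin N → ℂ) (T : Matrix (Fin L) (Fin L) ℂ)
    (hpsd : (blockN N L u X T).PosSemidef) :
    atomicNormN N L X ≤ (Matrix.trace (Toep N u)).re / (2 * N)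
      + (Matrix.trace T).re / 2 := by
  obtain ⟨a, g, ha, hg, hX⟩ := exists_gram_eq_of_posSemidef_blockN hpsd
  have htrT : (Matrix.trace T).re = ∑ l, ‖g l‖ ^ 2 := hg ▸ re_trace_gram (𝕜 := ℂ) g
  cases N with
  | zero =>
    calc atomicNormN 0 L X ≤ ∑ i : Fin 0, ‖(0 : EuclideanSpace ℂ (Fin L))‖ :=
          atomicNormN_le_sum_norm_of_eq_sum_pow (μ := fun _ => 1) _ (fun _ => norm_one)
            (fun _ n => n.elim0)
      _ ≤ _ := by rw [htrT]; simp; positivity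
  | succ M =>
    calc atomicNormN (M + 1) L X ≤ (‖a 0‖ ^ 2 + ∑ l, ‖g l‖ ^ 2) / 2 :=
          atomicNormN_le_of_gram_eq_toep ha hX
      _ = _ := by rw [re_trace_toep_eq_of_gram_eq ha, htrT]; field_simp; push_cast; ring

/-- **lower bound in the SDP characterization of the matrix atomic
norm.** If `T` is Hermitian and `[[Toep(u), Xᴴ], [X, T]]` is positive
semidefinite, then `‖X‖_{𝒜_n} ≤ (1/(2N)) tr(Toep(u)) + (1/2) tr(T)`. -/
theorem sdp_lower_bound_matrix (N L : ℕ) (X : Matrix (Fin L) (Fin N) ℂ)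
    (u : Fin N → ℂ) (T : Matrix (Fin L) (Fin L) ℂ) (hT : T.IsHermitian)
    (hpsd : (blockN N L u X T).PosSemidef) :
    atomicNormN N L X ≤ (Matrix.trace (Toep N u)).re / (2 * N)
      + (Matrix.trace T).re / 2 :=
  sdp_lower_bound_matrix_general N L X u T hpsd
end
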